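/- Under the regularity assumption, for every x ∈ ℝ^d and every l > 0, the second moment of the zeroth-order Hessian estimator in spectral norm satisfies E_{r∼N(0,I_d)}[‖H(x,r,l)‖₂²] ≤ M²·d(d+2)(d²+12d+33)/2 + M²·l⁴·d(d+2)(d+4)(d+6)(d²+20d+97)/288. -/

import Mathlib

open MeasureTheory ProbabilityTheory Matrix
open scoped Matrix.Norms.L2Operator

noncomputable section

abbrev Euc (d : ℕ) := EuclideanSpace ℝ (Fin d)

/-- The standard Gaussian measure `N(0, I_d)` on `ℝ^d`. -/
noncomputable def stdGaussian (d : ℕ) : Measure (Euc d) :=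
  (Measure.pi fun _ : Fin d => gaussianReal 0 1).map
    (MeasurableEquiv.toLp 2 (Fin d → ℝ))

/-- Two-point zeroth-order gradient estimator. -/
noncomputable def Fest {d : ℕ} (f : Euc d → ℝ) (x r : Euc d) (l : ℝ) : Euc d :=
  ((f (x + l • r) - f (x - l • r)) / (2 * l)) • r

/-- Gaussian smoothing of `f` with parameter `l`. -/
noncomputable def smooth {d : ℕ} (f : Euc d → ℝ) (l : ℝ) (x : Euc d) : ℝ :=
  ∫ r, f (x + l • r) ∂ stdGaussian d

/-- Regularity assumption: `f` is `C⁶` with derivatives of order `2..6`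
uniformly bounded by `M > 0`. -/
def Regular {d : ℕ} (f : Euc d → ℝ) (M : ℝ) : Prop :=
  ContDiff ℝ 6 f ∧ 0 < M ∧
    ∀ x : Euc d, ∀ i : ℕ, 2 ≤ i → i ≤ 6 → ‖iteratedFDeriv ℝ i f x‖ ≤ M

/-- Hessian matrix of `f` at `x` (entries are second directional derivatives
along standard basis vectors). -/
noncomputable def hess {d : ℕ} (f : Euc d → ℝ) (x : Euc d) : Matrix (Fin d) (Fin d) ℝ :=
  Matrix.of fun i j =>
    iteratedFDeriv ℝ 2 f x ![EuclideanSpace.single i 1, EuclideanSpace.single j 1]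

/-- Apply a `d × d` matrix to a vector of `ℝ^d` (Euclidean space). -/
noncomputable def matVec {d : ℕ} (A : Matrix (Fin d) (Fin d) ℝ) (v : Euc d) : Euc d :=
  (WithLp.equiv 2 (Fin d → ℝ)).symm (A.mulVec ((WithLp.equiv 2 (Fin d → ℝ)) v))

/-- Zeroth-order Hessian estimator (a `d × d` matrix). -/
noncomputable def Hest {d : ℕ} (f : Euc d → ℝ) (x r : Euc d) (l : ℝ) :
    Matrix (Fin d) (Fin d) ℝ :=
  ((f (x + l • r) + f (x - l • r) - 2 * f x) / (2 * l ^ 2)) •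
    (Matrix.vecMulVec ((WithLp.equiv 2 (Fin d → ℝ)) r) ((WithLp.equiv 2 (Fin d → ℝ)) r) - 1)

/-- Zeroth-order Hessian-vector estimator. -/
noncomputable def HVest {d : ℕ} (f : Euc d → ℝ) (x : Euc d) (v : Euc d) (r : Euc d) (l : ℝ) :
    Euc d :=
  (2 * l)⁻¹ • (Fest f (x + l • v) r l - Fest f (x - l • v) r l)


open scoped ENNReal NNReal

lemma integrable_pow_mul_gauss (k : ℕ) :
    Integrable (fun x : ℝ => x ^ k * Real.exp (-(2⁻¹ : ℝ) * x ^ 2)) := by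
  have h := integrable_rpow_mul_exp_neg_mul_sq (b := (2⁻¹:ℝ)) (by norm_num)
    (s := (k:ℝ)) (lt_of_lt_of_le neg_one_lt_zero (Nat.cast_nonneg k))
  simpa [Real.rpow_natCast] using h

lemma gauss_rec (k : ℕ) :
    ∫ x : ℝ, x ^ (k+2) * Real.exp (-(2⁻¹:ℝ) * x ^ 2)
      = (k+1) * ∫ x : ℝ, x ^ k * Real.exp (-(2⁻¹:ℝ) * x ^ 2) := by
  have hderiv : ∀ x : ℝ, HasDerivAt (fun x : ℝ => x ^ (k+1) * Real.exp (-(2⁻¹:ℝ) * x ^ 2))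
      ((k+1 : ℝ) * x ^ k * Real.exp (-(2⁻¹:ℝ) * x ^ 2)
        - x ^ (k+2) * Real.exp (-(2⁻¹:ℝ) * x ^ 2)) x := by
    intro x
    have h1 : HasDerivAt (fun x : ℝ => x ^ (k+1)) ((k+1 : ℝ) * x ^ k) x := by
      simpa using hasDerivAt_pow (k+1) x
    have h2 : HasDerivAt (fun x : ℝ => Real.exp (-(2⁻¹:ℝ) * x ^ 2))
        (Real.exp (-(2⁻¹:ℝ) * x ^ 2) * (-(2⁻¹:ℝ) * (2 * x))) x := by
      have := ((hasDerivAt_pow 2 x).const_mul (-(2⁻¹:ℝ))).exp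
      simpa using this
    have := h1.mul h2
    exact this.congr_deriv (by ring)
  have hint : Integrable (fun x : ℝ =>
      (k+1 : ℝ) * x ^ k * Real.exp (-(2⁻¹:ℝ) * x ^ 2)
        - x ^ (k+2) * Real.exp (-(2⁻¹:ℝ) * x ^ 2)) := by
    have h1 := (integrable_pow_mul_gauss k).const_mul ((k:ℝ)+1)
    have h2 := integrable_pow_mul_gauss (k+2)
    simpa [mul_assoc, Pi.sub_def] using h1.sub h2
  have h0 := integral_eq_zero_of_hasDerivAt_of_integrable hderiv hint
    (integrable_pow_mul_gauss (k+1))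
  have := integral_sub ((integrable_pow_mul_gauss k).const_mul ((k:ℝ)+1))
    (integrable_pow_mul_gauss (k+2))
  rw [integral_sub ?h1 (integrable_pow_mul_gauss (k+2))] at h0
  · have h3 : ∫ x : ℝ, (k+1 : ℝ) * x ^ k * Real.exp (-(2⁻¹:ℝ) * x ^ 2)
        = (k+1 : ℝ) * ∫ x : ℝ, x ^ k * Real.exp (-(2⁻¹:ℝ) * x ^ 2) := by
      simp_rw [mul_assoc]
      exact MeasureTheory.integral_const_mul _ _
    have := sub_eq_zero.mp h0
    rw [h3] at this
    linarith [this]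
  · simpa [mul_assoc] using (integrable_pow_mul_gauss k).const_mul ((k:ℝ)+1)

lemma gauss0 : ∫ x : ℝ, Real.exp (-(2⁻¹:ℝ) * x ^ 2) = Real.sqrt (2*Real.pi) := by
  have := integral_gaussian 2⁻¹
  rw [this]
  congr 1; ring


lemma pdf01 (x : ℝ) : gaussianPDFReal 0 1 x = (Real.sqrt (2*Real.pi))⁻¹ * Real.exp (-(2⁻¹:ℝ) * x ^ 2) := by
  unfold gaussianPDFReal
  rw [show -(2⁻¹:ℝ)*x^2 = -(x-0)^2/(2*1) by ring]
  norm_num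

lemma integral_gaussianReal01 (g : ℝ → ℝ) :
    ∫ y, g y ∂ gaussianReal 0 1 = ∫ x, gaussianPDFReal 0 1 x * g x := by
  rw [gaussianReal_of_var_ne_zero _ one_ne_zero]
  unfold gaussianPDF
  have hmeas : Measurable (fun x => (gaussianPDFReal 0 1 x).toNNReal) :=
    (measurable_gaussianPDFReal 0 1).real_toNNReal
  rw [show (fun x => ENNReal.ofReal (gaussianPDFReal 0 1 x))
      = (fun x => ((fun x => (gaussianPDFReal 0 1 x).toNNReal) x : ℝ≥0∞)) from rfl]
  rw [integral_withDensity_eq_integral_smul hmeas g]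
  congr 1
  ext x
  simp [NNReal.smul_def, Real.coe_toNNReal _ (gaussianPDFReal_nonneg 0 1 x)]

lemma integrable_gaussianReal01 (g : ℝ → ℝ)
    (h : Integrable (fun x => gaussianPDFReal 0 1 x * g x)) :
    Integrable g (gaussianReal 0 1) := by
  rw [gaussianReal_of_var_ne_zero _ one_ne_zero]
  unfold gaussianPDF
  have hmeas : Measurable (fun x => (gaussianPDFReal 0 1 x).toNNReal) :=
    (measurable_gaussianPDFReal 0 1).real_toNNReal
  rw [show (fun x => ENNReal.ofReal (gaussianPDFReal 0 1 x))
      = (fun x => ((fun x => (gaussianPDFReal 0 1 x).toNNReal) x : ℝ≥0∞)) from rfl]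
  rw [integrable_withDensity_iff_integrable_smul hmeas]
  convert h using 2 with x
  rfl
  simp [NNReal.smul_def, Real.coe_toNNReal _ (gaussianPDFReal_nonneg 0 1 x)]

lemma integrable_pow_gaussianReal (k : ℕ) :
    Integrable (fun x : ℝ => x ^ k) (gaussianReal 0 1) := by
  apply integrable_gaussianReal01
  have : (fun x => gaussianPDFReal 0 1 x * x ^ k)
      = fun x => (Real.sqrt (2*Real.pi))⁻¹ * (x ^ k * Real.exp (-(2⁻¹:ℝ) * x ^ 2)) := by
    funext x; rw [pdf01]; ring
  rw [this]
  exact (integrable_pow_mul_gauss k).const_mul _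

lemma gmom_eq (k : ℕ) : ∫ x, x ^ k ∂ gaussianReal 0 1
    = (Real.sqrt (2*Real.pi))⁻¹ * ∫ x : ℝ, x ^ k * Real.exp (-(2⁻¹:ℝ) * x ^ 2) := by
  rw [integral_gaussianReal01]
  rw [← MeasureTheory.integral_const_mul]
  congr 1; funext x; rw [pdf01]; ring


lemma I0 : ∫ x : ℝ, x ^ 0 * Real.exp (-(2⁻¹:ℝ) * x ^ 2) = Real.sqrt (2*Real.pi) := by
  simpa using gauss0

lemma I2 : ∫ x : ℝ, x ^ 2 * Real.exp (-(2⁻¹:ℝ) * x ^ 2) = Real.sqrt (2*Real.pi) := by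
  have := gauss_rec 0
  rw [I0] at this
  rw [this]
  push_cast
  ring

lemma I4 : ∫ x : ℝ, x ^ 4 * Real.exp (-(2⁻¹:ℝ) * x ^ 2) = 3 * Real.sqrt (2*Real.pi) := by
  have := gauss_rec 2
  rw [I2] at this
  rw [this]
  push_cast
  ring

lemma I6 : ∫ x : ℝ, x ^ 6 * Real.exp (-(2⁻¹:ℝ) * x ^ 2) = 15 * Real.sqrt (2*Real.pi) := by
  have := gauss_rec 4
  rw [I4] at this
  rw [this]
  push_cast
  ring

lemma I8 : ∫ x : ℝ, x ^ 8 * Real.exp (-(2⁻¹:ℝ) * x ^ 2) = 105 * Real.sqrt (2*Real.pi) := by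
  have := gauss_rec 6
  rw [I6] at this
  rw [this]
  push_cast
  ring

lemma sqrt2pi_pos : (0:ℝ) < Real.sqrt (2*Real.pi) := by
  positivity

lemma gmom0 : ∫ x, x ^ 0 ∂ gaussianReal 0 1 = 1 := by
  rw [gmom_eq, I0, inv_mul_cancel₀ sqrt2pi_pos.ne']

lemma gmom2 : ∫ x, x ^ 2 ∂ gaussianReal 0 1 = 1 := by
  rw [gmom_eq, I2, inv_mul_cancel₀ sqrt2pi_pos.ne']

lemma gmom4 : ∫ x, x ^ 4 ∂ gaussianReal 0 1 = 3 := by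
  rw [gmom_eq, I4]
  field_simp

lemma gmom6 : ∫ x, x ^ 6 ∂ gaussianReal 0 1 = 15 := by
  rw [gmom_eq, I6]
  field_simp

lemma gmom8 : ∫ x, x ^ 8 ∂ gaussianReal 0 1 = 105 := by
  rw [gmom_eq, I8]
  field_simp

noncomputable def pig (d : ℕ) : Measure (Fin d → ℝ) := Measure.pi fun _ => gaussianReal 0 1

instance (d : ℕ) : IsProbabilityMeasure (pig d) := by
  unfold pig; infer_instance

lemma integrable_S_pow (d : ℕ) : ∀ k : ℕ,
    Integrable (fun y : Fin d → ℝ => (∑ i, y i ^ 2) ^ k) (pig d) := by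
  induction d with
  | zero =>
    intro k
    simpa using integrable_const ((0:ℝ) ^ k) (μ := pig 0)
  | succ d ih =>
    intro k
    have h := measurePreserving_piFinSuccAbove (fun _ : Fin (d+1) => gaussianReal 0 1) 0
    let e := MeasurableEquiv.piFinSuccAbove (fun _ : Fin (d+1) => ℝ) 0
    have hprod : Integrable
        (fun z : ℝ × (Fin d → ℝ) => (z.1 ^ 2 + ∑ i, z.2 i ^ 2) ^ k)
        ((gaussianReal 0 1).prod (pig d)) := by
      have : (fun z : ℝ × (Fin d → ℝ) => (z.1 ^ 2 + ∑ i, z.2 i ^ 2) ^ k)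
          = fun z => ∑ j ∈ Finset.range (k+1),
              (z.1 ^ (2*j) * (∑ i, z.2 i ^ 2) ^ (k-j)) * (k.choose j : ℝ) := by
        funext z
        rw [add_pow]
        congr 1
        funext j
        rw [pow_mul]
      rw [this]
      apply integrable_finset_sum
      intro j _
      exact ((integrable_pow_gaussianReal (2*j)).mul_prod (ih (k-j))).mul_const _
    have := (h.integrable_comp_emb (MeasurableEquiv.measurableEmbedding e)).mpr hprod
    -- this : Integrable ((fun z => ...) ∘ e) (pig (d+1))
    unfold pig
    convert this using 1
    funext y
    simp only [Function.comp_apply]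
    rw [show (∑ i, y i ^ 2) = y 0 ^ 2 + ∑ i : Fin d, y (Fin.succAbove 0 i) ^ 2 from
      Fin.sum_univ_succAbove (fun i => y i ^ 2) 0]
    rfl

lemma step (d k : ℕ) :
    ∫ y, (∑ i, y i ^ 2) ^ k ∂ pig (d+1)
      = ∑ j ∈ Finset.range (k+1),
          (∫ x, x ^ (2*j) ∂ gaussianReal 0 1)
            * (∫ y, (∑ i, y i ^ 2) ^ (k-j) ∂ pig d) * (k.choose j : ℝ) := by
  have h := measurePreserving_piFinSuccAbove (fun _ : Fin (d+1) => gaussianReal 0 1) 0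
  let e := MeasurableEquiv.piFinSuccAbove (fun _ : Fin (d+1) => ℝ) 0
  have key : ∫ y, (∑ i, y i ^ 2) ^ k ∂ pig (d+1)
      = ∫ z : ℝ × (Fin d → ℝ), (z.1 ^ 2 + ∑ i, z.2 i ^ 2) ^ k
          ∂ ((gaussianReal 0 1).prod (pig d)) := by
    unfold pig
    rw [← h.integral_comp (MeasurableEquiv.measurableEmbedding e)
        (fun z : ℝ × (Fin d → ℝ) => (z.1 ^ 2 + ∑ i, z.2 i ^ 2) ^ k)]
    congr 1
    funext y
    rw [show (∑ i, y i ^ 2) = y 0 ^ 2 + ∑ i : Fin d, y (Fin.succAbove 0 i) ^ 2 from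
      Fin.sum_univ_succAbove (fun i => y i ^ 2) 0]
    rfl
  rw [key]
  have expand : (fun z : ℝ × (Fin d → ℝ) => (z.1 ^ 2 + ∑ i, z.2 i ^ 2) ^ k)
      = fun z => ∑ j ∈ Finset.range (k+1),
          (z.1 ^ (2*j) * (∑ i, z.2 i ^ 2) ^ (k-j)) * (k.choose j : ℝ) := by
    funext z
    rw [add_pow]
    congr 1
    funext j
    rw [pow_mul]
  rw [expand]
  rw [integral_finset_sum (μ := (gaussianReal 0 1).prod (pig d)) _ (fun j _ =>
    ((integrable_pow_gaussianReal (2*j)).mul_prod (integrable_S_pow d (k-j))).mul_const _)]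
  congr 1
  funext j
  rw [MeasureTheory.integral_mul_const,
    integral_prod_mul (f := fun x : ℝ => x ^ (2*j)) (g := fun y : Fin d → ℝ => (∑ i, y i ^ 2) ^ (k-j))]


lemma V0 (d : ℕ) : ∫ y, (∑ i, y i ^ 2) ^ 0 ∂ pig d = 1 := by
  simp

lemma Vvals (d : ℕ) :
    (∫ y, (∑ i, y i ^ 2) ^ 1 ∂ pig d) = d
    ∧ (∫ y, (∑ i, y i ^ 2) ^ 2 ∂ pig d) = d * (d+2)
    ∧ (∫ y, (∑ i, y i ^ 2) ^ 3 ∂ pig d) = d * (d+2) * (d+4)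
    ∧ (∫ y, (∑ i, y i ^ 2) ^ 4 ∂ pig d) = d * (d+2) * (d+4) * (d+6) := by
  induction d with
  | zero =>
    refine ⟨?_, ?_, ?_, ?_⟩ <;> simp
  | succ d ih =>
    obtain ⟨h1, h2, h3, h4⟩ := ih
    have h1' : ∫ y, (∑ i, y i ^ 2) ∂ pig d = (d:ℝ) := by simpa using h1
    have hc42 : ((Nat.choose 4 2 : ℕ) : ℝ) = 6 := by norm_num [Nat.choose]
    have e1 : (∫ y, (∑ i, y i ^ 2) ^ 1 ∂ pig (d+1)) = (d:ℝ) + 1 := by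
      rw [step]
      simp only [Finset.sum_range_succ, Finset.sum_range_zero]
      norm_num [h1, V0, gmom0, gmom2, h1', hc42]
    have e2 : (∫ y, (∑ i, y i ^ 2) ^ 2 ∂ pig (d+1)) = ((d:ℝ)+1) * ((d:ℝ)+3) := by
      rw [step]
      simp only [Finset.sum_range_succ, Finset.sum_range_zero]
      norm_num [h1, h2, V0, gmom0, gmom2, gmom4, h1', hc42]
      ring
    have e3 : (∫ y, (∑ i, y i ^ 2) ^ 3 ∂ pig (d+1)) = ((d:ℝ)+1) * ((d:ℝ)+3) * ((d:ℝ)+5) := by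
      rw [step]
      simp only [Finset.sum_range_succ, Finset.sum_range_zero]
      norm_num [h1, h2, h3, V0, gmom0, gmom2, gmom4, gmom6, h1', hc42]
      ring
    have e4 : (∫ y, (∑ i, y i ^ 2) ^ 4 ∂ pig (d+1)) = ((d:ℝ)+1) * ((d:ℝ)+3) * ((d:ℝ)+5) * ((d:ℝ)+7) := by
      rw [step]
      simp only [Finset.sum_range_succ, Finset.sum_range_zero]
      norm_num [h1, h2, h3, h4, V0, gmom0, gmom2, gmom4, gmom6, gmom8, h1', hc42]
      ring
    refine ⟨?_, ?_, ?_, ?_⟩ <;> push_cast <;>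
      [rw [e1]; rw [e2]; rw [e3]; rw [e4]] <;> ring

variable {E : Type*} [NormedAddCommGroup E] [NormedSpace ℝ E]

lemma fderiv_lip {f : E → ℝ} {M : ℝ} (hf : ContDiff ℝ 6 f)
    (hM : ∀ y : E, ‖iteratedFDeriv ℝ 2 f y‖ ≤ M) (a b : E) :
    ‖fderiv ℝ f a - fderiv ℝ f b‖ ≤ M * ‖a - b‖ := by
  have hM0 : 0 ≤ M := le_trans (norm_nonneg _) (hM 0)
  have hdiff : ∀ y : E, DifferentiableAt ℝ (fderiv ℝ f) y := by
    intro y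
    exact ((hf.fderiv_right (m := 1) (by norm_num)).differentiable (by norm_num)).differentiableAt
  have hbound : ∀ z : E, ‖fderiv ℝ (fderiv ℝ f) z‖ ≤ M := by
    intro z
    apply ContinuousLinearMap.opNorm_le_bound _ hM0
    intro u
    apply ContinuousLinearMap.opNorm_le_bound _ (by positivity)
    intro v
    rw [show fderiv ℝ (fderiv ℝ f) z u v = iteratedFDeriv ℝ 2 f z ![u, v] from
      (iteratedFDeriv_two_apply f z ![u, v]).symm]
    calc ‖iteratedFDeriv ℝ 2 f z ![u, v]‖
        ≤ ‖iteratedFDeriv ℝ 2 f z‖ * ∏ i, ‖(![u, v]) i‖ :=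
          (iteratedFDeriv ℝ 2 f z).le_opNorm _
      _ ≤ M * (‖u‖ * ‖v‖) := by
          rw [Fin.prod_univ_two]
          simp only [Matrix.cons_val_zero, Matrix.cons_val_one, Matrix.head_cons]
          exact mul_le_mul_of_nonneg_right (hM z) (by positivity)
      _ = M * ‖u‖ * ‖v‖ := by ring
  have := convex_univ.norm_image_sub_le_of_norm_fderiv_le
    (fun y _ => hdiff y) (fun y _ => hbound y) (Set.mem_univ b) (Set.mem_univ a)
  simpa using this

lemma taylor_sym_bound {f : E → ℝ} {M : ℝ} (hf : ContDiff ℝ 6 f)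
    (hM : ∀ y : E, ‖iteratedFDeriv ℝ 2 f y‖ ≤ M) (x h : E) :
    |f (x + h) + f (x - h) - 2 * f x| ≤ M * ‖h‖ ^ 2 := by
  have hM0 : 0 ≤ M := le_trans (norm_nonneg _) (hM 0)
  set g : ℝ → ℝ := fun t => f (x + t • h) + f (x + t • (-h)) with hg
  have hd : ∀ t : ℝ, HasDerivAt g
      (fderiv ℝ f (x + t • h) h + fderiv ℝ f (x + t • (-h)) (-h)) t := by
    intro t
    have c1 : ∀ (w : E), HasDerivAt (fun s : ℝ => x + s • w) w t := by
      intro w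
      simpa using ((hasDerivAt_id t).smul_const w).const_add x
    have hfd : ∀ y : E, HasFDerivAt f (fderiv ℝ f y) y := fun y =>
      (hf.differentiable (by norm_num) y).hasFDerivAt
    exact ((hfd _).comp_hasDerivAt t (c1 h)).add ((hfd _).comp_hasDerivAt t (c1 (-h)))
  have hcont : Continuous fun t : ℝ =>
      fderiv ℝ f (x + t • h) h + fderiv ℝ f (x + t • (-h)) (-h) := by
    have hc := (hf.continuous_fderiv (by norm_num))
    fun_prop
  have ftc := intervalIntegral.integral_eq_sub_of_hasDerivAt
    (f := g) (a := (0:ℝ)) (b := 1) (fun t _ => hd t)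
    (hcont.intervalIntegrable 0 1)
  have hbnd : ∀ t ∈ Set.Ioc (0:ℝ) 1,
      ‖fderiv ℝ f (x + t • h) h + fderiv ℝ f (x + t • (-h)) (-h)‖ ≤ 2 * M * ‖h‖ ^ 2 * t := by
    intro t ht
    have : fderiv ℝ f (x + t • h) h + fderiv ℝ f (x + t • (-h)) (-h)
        = (fderiv ℝ f (x + t • h) - fderiv ℝ f (x + t • (-h))) h := by
      rw [ContinuousLinearMap.sub_apply, map_neg]
      ring
    rw [this]
    calc ‖(fderiv ℝ f (x + t • h) - fderiv ℝ f (x + t • (-h))) h‖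
        ≤ ‖fderiv ℝ f (x + t • h) - fderiv ℝ f (x + t • (-h))‖ * ‖h‖ :=
          ContinuousLinearMap.le_opNorm _ _
      _ ≤ (M * ‖(x + t • h) - (x + t • (-h))‖) * ‖h‖ :=
          mul_le_mul_of_nonneg_right (fderiv_lip hf hM _ _) (norm_nonneg _)
      _ = 2 * M * ‖h‖ ^ 2 * t := by
          rw [show (x + t • h) - (x + t • (-h)) = (2*t) • h by module]
          rw [norm_smul]
          simp [abs_of_nonneg (le_of_lt ht.1)]
          ring
  have hTle : |g 1 - g 0| ≤ M * ‖h‖ ^ 2 := by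
    rw [← ftc]
    have := intervalIntegral.norm_integral_le_of_norm_le
      (f := fun t => fderiv ℝ f (x + t • h) h + fderiv ℝ f (x + t • (-h)) (-h))
      (g := fun t => 2 * M * ‖h‖ ^ 2 * t) (a := 0) (b := 1) (μ := volume)
      (by norm_num) ?_ ?_
    · refine le_trans this ?_
      rw [intervalIntegral.integral_const_mul, integral_id]
      apply le_of_eq
      ring
    · exact ae_of_all _ hbnd
    · apply Continuous.intervalIntegrable
      fun_prop
  have hg1 : g 1 = f (x + h) + f (x - h) := by
    simp [hg, sub_eq_add_neg]
  have hg0 : g 0 = 2 * f x := by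
    simp [hg]; ring
  rw [hg1, hg0] at hTle
  exact hTle

lemma norm_one_le_l2 {d : ℕ} : ‖(1 : Matrix (Fin d) (Fin d) ℝ)‖ ≤ 1 := by
  rw [Matrix.cstar_norm_def, _root_.map_one]
  exact ContinuousLinearMap.norm_id_le

lemma norm_vecMulVec_le {d : ℕ} (r : Euc d) :
    ‖Matrix.vecMulVec ((WithLp.equiv 2 (Fin d → ℝ)) r) ((WithLp.equiv 2 (Fin d → ℝ)) r)‖
      ≤ ‖r‖ ^ 2 := by
  rw [Matrix.l2_opNorm_def]
  apply ContinuousLinearMap.opNorm_le_bound _ (by positivity)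
  intro v
  set u := (WithLp.equiv 2 (Fin d → ℝ)) r with hu
  have happ : (LinearEquiv.trans Matrix.toEuclideanLin LinearMap.toContinuousLinearMap)
        (Matrix.vecMulVec u u) v
      = (WithLp.equiv 2 (Fin d → ℝ)).symm ((Matrix.vecMulVec u u).mulVec
          ((WithLp.equiv 2 (Fin d → ℝ)) v)) := rfl
  rw [happ]
  have hmv : (Matrix.vecMulVec u u).mulVec ((WithLp.equiv 2 (Fin d → ℝ)) v)
      = (u ⬝ᵥ ((WithLp.equiv 2 (Fin d → ℝ)) v)) • u := by
    funext i
    simp only [Matrix.mulVec, dotProduct, Matrix.vecMulVec_apply, Pi.smul_apply,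
      smul_eq_mul]
    rw [Finset.sum_mul]
    exact Finset.sum_congr rfl fun j _ => by ring
  rw [hmv]
  have hsm : (WithLp.equiv 2 (Fin d → ℝ)).symm ((u ⬝ᵥ ((WithLp.equiv 2 (Fin d → ℝ)) v)) • u)
      = (u ⬝ᵥ ((WithLp.equiv 2 (Fin d → ℝ)) v)) • r := by
    rfl
  rw [hsm, norm_smul]
  have hips : u ⬝ᵥ ((WithLp.equiv 2 (Fin d → ℝ)) v) = (inner ℝ r v : ℝ) := by
    simp [dotProduct, PiLp.inner_apply, RCLike.inner_apply, hu, mul_comm]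
  rw [hips]
  calc ‖(inner ℝ r v : ℝ)‖ * ‖r‖ ≤ (‖r‖ * ‖v‖) * ‖r‖ := by
        apply mul_le_mul_of_nonneg_right _ (norm_nonneg r)
        rw [Real.norm_eq_abs]
        exact abs_real_inner_le_norm r v
    _ = ‖r‖ ^ 2 * ‖v‖ := by ring


lemma Hest_pointwise {d : ℕ} {f : Euc d → ℝ} {M : ℝ} (hf : ContDiff ℝ 6 f)
    (hM : ∀ y : Euc d, ‖iteratedFDeriv ℝ 2 f y‖ ≤ M) (hM0 : 0 ≤ M)
    (x r : Euc d) {l : ℝ} (hl : 0 < l) :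
    ‖Hest f x r l‖ ≤ M * ‖r‖ ^ 2 / 2 * (‖r‖ ^ 2 + 1) := by
  unfold Hest
  rw [norm_smul]
  have hc : ‖(f (x + l • r) + f (x - l • r) - 2 * f x) / (2 * l ^ 2)‖ ≤ M * ‖r‖ ^ 2 / 2 := by
    rw [Real.norm_eq_abs, abs_div]
    rw [abs_of_pos (by positivity : (0:ℝ) < 2 * l ^ 2)]
    rw [div_le_iff₀ (by positivity)]
    calc |f (x + l • r) + f (x - l • r) - 2 * f x| ≤ M * ‖l • r‖ ^ 2 :=
          taylor_sym_bound hf hM x (l • r)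
      _ = M * ‖r‖ ^ 2 / 2 * (2 * l ^ 2) := by
          rw [norm_smul, Real.norm_eq_abs, abs_of_pos hl]
          ring
  have hB : ‖Matrix.vecMulVec ((WithLp.equiv 2 (Fin d → ℝ)) r) ((WithLp.equiv 2 (Fin d → ℝ)) r)
      - (1 : Matrix (Fin d) (Fin d) ℝ)‖ ≤ ‖r‖ ^ 2 + 1 := by
    calc ‖Matrix.vecMulVec ((WithLp.equiv 2 (Fin d → ℝ)) r) ((WithLp.equiv 2 (Fin d → ℝ)) r)
        - (1 : Matrix (Fin d) (Fin d) ℝ)‖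
        ≤ ‖Matrix.vecMulVec ((WithLp.equiv 2 (Fin d → ℝ)) r) ((WithLp.equiv 2 (Fin d → ℝ)) r)‖
          + ‖(1 : Matrix (Fin d) (Fin d) ℝ)‖ := norm_sub_le _ _
      _ ≤ ‖r‖ ^ 2 + 1 := add_le_add (norm_vecMulVec_le r) norm_one_le_l2
  exact mul_le_mul hc hB (norm_nonneg _) (by positivity)

/-- second-moment bound, in spectral norm, for the zeroth-order Hessian
estimator: `E[‖H(x,r,l)‖₂²] ≤ M² d(d+2)(d²+12d+33)/2 + M² l⁴ d(d+2)(d+4)(d+6)(d²+20d+97)/288`.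
(The norm on matrices here is the `L²` operator norm, i.e. the spectral norm, from the
scoped instance `Matrix.L2OpNorm`.) -/
theorem second_moment_hessian_estimator {d : ℕ} (f : Euc d → ℝ) (M : ℝ)
    (hf : Regular f M) (x : Euc d) (l : ℝ) (hl : 0 < l) :
    ∫ r, ‖Hest f x r l‖ ^ 2 ∂ stdGaussian d ≤
      M ^ 2 * (d * (d + 2) * (d ^ 2 + 12 * d + 33)) / 2 +
        M ^ 2 * l ^ 4 * (d * (d + 2) * (d + 4) * (d + 6) * (d ^ 2 + 20 * d + 97)) / 288 := by
  obtain ⟨hC6, hMpos, hbd⟩ := hf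
  have hM2 : ∀ y : Euc d, ‖iteratedFDeriv ℝ 2 f y‖ ≤ M := fun y => hbd y 2 le_rfl (by norm_num)
  rw [show stdGaussian d = (pig d).map (MeasurableEquiv.toLp 2 (Fin d → ℝ)) from rfl,
    MeasureTheory.integral_map_equiv]
  have hnorm : ∀ y : Fin d → ℝ,
      ‖MeasurableEquiv.toLp 2 (Fin d → ℝ) y‖ ^ 2 = ∑ i, y i ^ 2 := by
    intro y
    rw [EuclideanSpace.norm_eq, Real.sq_sqrt (by positivity)]
    simp only [Real.norm_eq_abs, sq_abs]
    rfl
  have hptb : ∀ y : Fin d → ℝ,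
      ‖Hest f x (MeasurableEquiv.toLp 2 (Fin d → ℝ) y) l‖ ^ 2
        ≤ M^2/4 * ((∑ i, y i ^ 2)^4 + 2*(∑ i, y i ^ 2)^3 + (∑ i, y i ^ 2)^2) := by
    intro y
    set r := MeasurableEquiv.toLp 2 (Fin d → ℝ) y with hr
    have h1 := Hest_pointwise hC6 hM2 hMpos.le x r hl
    have h2 : ‖Hest f x r l‖ ^ 2 ≤ (M * ‖r‖ ^ 2 / 2 * (‖r‖ ^ 2 + 1)) ^ 2 := by
      apply pow_le_pow_left₀ (norm_nonneg _) h1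
    refine le_trans h2 (le_of_eq ?_)
    rw [hnorm y]
    ring
  have hint : Integrable (fun y : Fin d → ℝ =>
      M^2/4 * ((∑ i, y i ^ 2)^4 + 2*(∑ i, y i ^ 2)^3 + (∑ i, y i ^ 2)^2)) (pig d) := by
    apply Integrable.const_mul
    exact ((integrable_S_pow d 4).add ((integrable_S_pow d 3).const_mul 2)).add
      (integrable_S_pow d 2)
  have hmono := integral_mono_of_nonneg
    (f := fun y : Fin d → ℝ => ‖Hest f x (MeasurableEquiv.toLp 2 (Fin d → ℝ) y) l‖ ^ 2)
    (g := fun y : Fin d → ℝ =>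
      M^2/4 * ((∑ i, y i ^ 2)^4 + 2*(∑ i, y i ^ 2)^3 + (∑ i, y i ^ 2)^2))
    (ae_of_all _ fun y => by positivity) hint (ae_of_all _ hptb)
  refine le_trans hmono ?_
  obtain ⟨V1, V2, V3, V4⟩ := Vvals d
  rw [MeasureTheory.integral_const_mul]
  have i4 : Integrable (fun y : Fin d → ℝ => (∑ i, y i ^ 2)^4) (pig d) := integrable_S_pow d 4
  have i3 : Integrable (fun y : Fin d → ℝ => 2*(∑ i, y i ^ 2)^3) (pig d) :=
    (integrable_S_pow d 3).const_mul 2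
  have i2 : Integrable (fun y : Fin d → ℝ => (∑ i, y i ^ 2)^2) (pig d) := integrable_S_pow d 2
  have i43 : Integrable (fun y : Fin d → ℝ => (∑ i, y i ^ 2)^4 + 2*(∑ i, y i ^ 2)^3) (pig d) :=
    i4.add i3
  rw [integral_add i43 i2, integral_add i4 i3,
    MeasureTheory.integral_const_mul, V2, V3, V4]
  have hd0 : (0:ℝ) ≤ (d:ℝ) := Nat.cast_nonneg d
  have h2nd : (0:ℝ) ≤ M ^ 2 * l ^ 4 *
      ((d:ℝ) * ((d:ℝ) + 2) * ((d:ℝ) + 4) * ((d:ℝ) + 6) * ((d:ℝ) ^ 2 + 20 * (d:ℝ) + 97)) / 288 := by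
    positivity
  have hfirst : (0:ℝ) ≤ M ^ 2 * ((d:ℝ) * ((d:ℝ) + 2) * ((d:ℝ) ^ 2 + 12 * (d:ℝ) + 33)) := by
    positivity
  nlinarith [hfirst, h2nd]
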